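/- arXiv:1802.03669 — 2 statements merged into one kernel-verified Lean document; each statement's English description precedes it below -/
import Mathlib

section
/- (Corollary 1) Let N be a finite set of countries with powers p_k ≥ 0, let i ∈ N with p_i > 0, and let S ⊆ N be a nonempty subset with i ∉ S such that t_ij^A(1) > t_ij^F(1) for every j ∈ S and p_i + Σ_{j∈S} p_j ≤ Σ_{k∈N, k∉S∪{i}} p_k (so in particular N \ (S ∪ {i}) is nonempty). Then there exist two environments Γ and Γ̄ on N with these powers, identical except that every j ∈ S is a friend of i in Γ and an adversary of i in Γ̄ (namely: in Γ, country i is a friend of every country, every country other than i is an adversary of every j ∈ S, and there are no other relations; Γ̄ is the same except that i is an adversary of every j ∈ S), such that country i's optimal welfare satisfies f*_i(Γ) < f*_i(Γ̄); i.e. having the countries of S as additional friends strictly decreases country i's optimal welfare. -/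
open Finset

/-- A networked environment: friend sets, adversary sets and powers. -/
structure Env (n : ℕ) where
  F : Fin n → Finset (Fin n)
  A : Fin n → Finset (Fin n)
  p : Fin n → ℝ
  self_friend : ∀ i, i ∈ F i
  disj : ∀ i, Disjoint (F i) (A i)
  F_symm : ∀ i j, j ∈ F i ↔ i ∈ F j
  A_symm : ∀ i j, j ∈ A i ↔ i ∈ A j
  p_nonneg : ∀ i, 0 ≤ p i

/-- `U` is a strategy matrix for environment `E`. -/
def IsStrat {n : ℕ} (E : Env n) (U : Fin n → Fin n → ℝ) : Prop :=
  (∀ i j, 0 ≤ U i j) ∧ (∀ i, ∑ j, U i j = E.p i) ∧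
    (∀ i j, j ∉ E.F i → j ∉ E.A i → U i j = 0)

/-- Total support `σ_i(U)`. -/
def totalSupport {n : ℕ} (E : Env n) (U : Fin n → Fin n → ℝ) (i : Fin n) : ℝ :=
  (∑ j ∈ E.F i, U j i) + ∑ j ∈ E.A i, U i j

/-- Total threat `τ_i(U)`. -/
def totalThreat {n : ℕ} (E : Env n) (U : Fin n → Fin n → ℝ) (i : Fin n) : ℝ :=
  ∑ j ∈ E.A i, U j i

/-- Country `i` survives under `U` (is safe or precarious). -/
def Survives {n : ℕ} (E : Env n) (U : Fin n → Fin n → ℝ) (i : Fin n) : Prop :=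
  totalThreat E U i ≤ totalSupport E U i

open Classical in
/-- Country `i`'s utility `f_i(U)` given pairwise utilities `tF1 ≥ tF0`, `tA1 ≥ tA0`. -/
noncomputable def utility {n : ℕ} (E : Env n) (tF1 tF0 tA1 tA0 : Fin n → Fin n → ℝ)
    (U : Fin n → Fin n → ℝ) (i : Fin n) : ℝ :=
  if totalSupport E U i < totalThreat E U i then tF0 i i
  else (∑ j ∈ E.F i, if totalThreat E U j ≤ totalSupport E U j then tF1 i j else tF0 i j)
     + ∑ j ∈ E.A i, if totalSupport E U j ≤ totalThreat E U j then tA1 i j else tA0 i j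

/-- `U` is a (pure strategy) Nash equilibrium of the power allocation game. -/
noncomputable def IsNash {n : ℕ} (E : Env n) (tF1 tF0 tA1 tA0 : Fin n → Fin n → ℝ)
    (U : Fin n → Fin n → ℝ) : Prop :=
  IsStrat E U ∧ ∀ (i : Fin n) (v : Fin n → ℝ), (∀ j, 0 ≤ v j) → (∑ j, v j = E.p i) →
    (∀ j, j ∉ E.F i → j ∉ E.A i → v j = 0) →
    utility E tF1 tF0 tA1 tA0 (Function.update U i v) i ≤ utility E tF1 tF0 tA1 tA0 U i

/-- Country `i`'s optimal welfare: the sup of its utility over all strategy matrices. -/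
noncomputable def optWelfare {n : ℕ} (E : Env n) (tF1 tF0 tA1 tA0 : Fin n → Fin n → ℝ)
    (i : Fin n) : ℝ :=
  sSup {x | ∃ U, IsStrat E U ∧ x = utility E tF1 tF0 tA1 tA0 U i}

/-!
In `Γ` the country `i` has no adversaries, so its utility is at most `Σ_j t_ij^F(1)`. In `Γ̄`
the countries outside `S ∪ {i}` can spread their power over `S` in proportion to the powers
`p_j`; the hypothesis `p_i + Σ_{j ∈ S} p_j ≤ Σ_{k ∉ S ∪ {i}} p_k` leaves them enough power to
put a threat of exactly `p_j` on each `j ∈ S`. A country `j ∈ S` has no friend but itself, so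
its support is exactly `p_j` and it is then precarious: it survives, yet counts as defeated
for its adversary `i`. Meanwhile nobody threatens a country outside `S`, so `i` collects
`Σ_{j ∉ S} t_ij^F(1) + Σ_{j ∈ S} t_ij^A(1)`, which is strictly larger.
-/

open Finset

variable {n : ℕ}

section Welfare

variable {E : Env n} {U : Fin n → Fin n → ℝ} {i : Fin n} {tF1 tF0 tA1 tA0 : Fin n → Fin n → ℝ}

lemma IsStrat.totalSupport_nonneg (hU : IsStrat E U) (k : Fin n) : 0 ≤ totalSupport E U k :=
  add_nonneg (sum_nonneg fun _ _ => hU.1 _ _) (sum_nonneg fun _ _ => hU.1 _ _)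

lemma IsStrat.survives_of_totalThreat_eq_zero (hU : IsStrat E U) {k : Fin n}
    (hk : totalThreat E U k = 0) : Survives E U k := by
  rw [Survives, hk]
  exact hU.totalSupport_nonneg k

lemma IsStrat.totalSupport_eq_of_F_eq_singleton (hU : IsStrat E U) {k : Fin n}
    (hF : E.F k = {k}) (hA : E.A k = {k}ᶜ) : totalSupport E U k = E.p k := by
  rw [totalSupport, hF, hA, sum_singleton, ← hU.2.1 k, ← sum_singleton (U k) k,
    sum_add_sum_compl]

lemma isStrat_diagonal (E : Env n) : IsStrat E (Matrix.diagonal E.p) := by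
  refine ⟨fun k l => ?_, fun k => ?_, fun k l hF _ => ?_⟩
  · by_cases h : k = l <;> simp [h, E.p_nonneg]
  · simp [Matrix.diagonal_apply]
  · rw [Matrix.diagonal_apply_ne]
    rintro rfl
    exact hF (E.self_friend k)

lemma utility_of_survives (hi : Survives E U i) (hF : ∀ j ∈ E.F i, Survives E U j)
    (hA : ∀ j ∈ E.A i, totalSupport E U j ≤ totalThreat E U j) :
    utility E tF1 tF0 tA1 tA0 U i = ∑ j ∈ E.F i, tF1 i j + ∑ j ∈ E.A i, tA1 i j := by
  rw [utility, if_neg (not_lt.2 hi)]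
  exact congr_arg₂ _ (sum_congr rfl fun j hj => if_pos (hF j hj))
    (sum_congr rfl fun j hj => if_pos (hA j hj))

lemma utility_le_of_survives (ht : ∀ j, tF0 i j ≤ tF1 i j ∧ tA0 i j ≤ tA1 i j)
    (hi : Survives E U i) :
    utility E tF1 tF0 tA1 tA0 U i ≤ ∑ j ∈ E.F i, tF1 i j + ∑ j ∈ E.A i, tA1 i j := by
  rw [utility, if_neg (not_lt.2 hi)]
  gcongr with j _ j _
  · split_ifs
    exacts [le_rfl, (ht j).1]
  · split_ifs
    exacts [le_rfl, (ht j).2]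

lemma bddAbove_utility (ht : ∀ j, tF0 i j ≤ tF1 i j ∧ tA0 i j ≤ tA1 i j) :
    BddAbove {x | ∃ U, IsStrat E U ∧ x = utility E tF1 tF0 tA1 tA0 U i} := by
  refine ⟨max (tF0 i i) (∑ j ∈ E.F i, tF1 i j + ∑ j ∈ E.A i, tA1 i j), ?_⟩
  rintro _ ⟨U, -, rfl⟩
  by_cases hi : Survives E U i
  · exact (utility_le_of_survives ht hi).trans (le_max_right _ _)
  · rw [utility, if_pos (not_le.1 hi)]
    exact le_max_left _ _

lemma le_optWelfare (ht : ∀ j, tF0 i j ≤ tF1 i j ∧ tA0 i j ≤ tA1 i j) (hU : IsStrat E U) :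
    utility E tF1 tF0 tA1 tA0 U i ≤ optWelfare E tF1 tF0 tA1 tA0 i :=
  le_csSup (bddAbove_utility ht) ⟨U, hU, rfl⟩

lemma optWelfare_le {b : ℝ} (h : ∀ U, IsStrat E U → utility E tF1 tF0 tA1 tA0 U i ≤ b) :
    optWelfare E tF1 tF0 tA1 tA0 i ≤ b :=
  csSup_le ⟨_, _, isStrat_diagonal E, rfl⟩ <| by
    rintro _ ⟨U, hU, rfl⟩
    exact h U hU

lemma optWelfare_le_of_A_eq_empty (ht : ∀ j, tF0 i j ≤ tF1 i j ∧ tA0 i j ≤ tA1 i j)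
    (hA : E.A i = ∅) : optWelfare E tF1 tF0 tA1 tA0 i ≤ ∑ j ∈ E.F i, tF1 i j :=
  optWelfare_le fun U hU => by
    have hi : Survives E U i :=
      hU.survives_of_totalThreat_eq_zero (by rw [totalThreat, hA, sum_empty])
    simpa [hA] using utility_le_of_survives ht hi

end Welfare

section Paradox

variable (p : Fin n → ℝ) (hp : ∀ k, 0 ≤ p k) (i : Fin n) (S : Finset (Fin n)) (hiS : i ∉ S)

/-- The environment `Γ`, in which `S` are friends of `i`. -/
def friendlyEnv : Env n where
  F k := univ.filter fun l => k = l ∨ k = i ∨ l = i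
  A k := univ.filter fun l => (k ∈ S ∧ l ≠ i ∧ l ≠ k) ∨ (l ∈ S ∧ k ≠ i ∧ k ≠ l)
  p := p
  self_friend k := by simp
  disj k := by
    rw [disjoint_left]
    simp only [mem_filter, mem_univ, true_and]
    rintro l (rfl | rfl | rfl) <;> simp_all
  F_symm k l := by
    simp only [mem_filter, mem_univ, true_and]
    tauto
  A_symm k l := by
    simp only [mem_filter, mem_univ, true_and]
    exact or_comm
  p_nonneg := hp

/-- The environment `Γ̄`, in which `S` are adversaries of `i`. -/
def hostileEnv : Env n where
  F k := univ.filter fun l => k = l ∨ (k = i ∧ l ∉ S) ∨ (l = i ∧ k ∉ S)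
  A k := univ.filter fun l => (k ∈ S ∧ l ≠ k) ∨ (l ∈ S ∧ k ≠ l)
  p := p
  self_friend k := by simp
  disj k := by
    rw [disjoint_left]
    simp only [mem_filter, mem_univ, true_and]
    rintro l (rfl | ⟨rfl, h⟩ | ⟨rfl, h⟩) <;> simp_all
  F_symm k l := by
    simp only [mem_filter, mem_univ, true_and]
    tauto
  A_symm k l := by
    simp only [mem_filter, mem_univ, true_and]
    exact or_comm
  p_nonneg := hp

lemma mem_friendlyEnv_F (k l : Fin n) :
    l ∈ (friendlyEnv p hp i S hiS).F k ↔ (k = l ∨ k = i ∨ l = i) := by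
  simp [friendlyEnv]

lemma mem_friendlyEnv_A (k l : Fin n) :
    l ∈ (friendlyEnv p hp i S hiS).A k ↔
      ((k ∈ S ∧ l ≠ i ∧ l ≠ k) ∨ (l ∈ S ∧ k ≠ i ∧ k ≠ l)) := by
  simp [friendlyEnv]

lemma mem_hostileEnv_F (k l : Fin n) :
    l ∈ (hostileEnv p hp i S hiS).F k ↔ (k = l ∨ (k = i ∧ l ∉ S) ∨ (l = i ∧ k ∉ S)) := by
  simp [hostileEnv]

lemma mem_hostileEnv_A (k l : Fin n) :
    l ∈ (hostileEnv p hp i S hiS).A k ↔ ((k ∈ S ∧ l ≠ k) ∨ (l ∈ S ∧ k ≠ l)) := by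
  simp [hostileEnv]

lemma friendlyEnv_F_self : (friendlyEnv p hp i S hiS).F i = univ := by
  ext l; simp [mem_friendlyEnv_F]

lemma friendlyEnv_A_self : (friendlyEnv p hp i S hiS).A i = ∅ := by
  ext l; simp [mem_friendlyEnv_A, hiS]

lemma hostileEnv_F_self : (hostileEnv p hp i S hiS).F i = Sᶜ := by
  ext l
  simp only [mem_hostileEnv_F, mem_compl]
  constructor
  · rintro (rfl | ⟨-, h⟩ | ⟨rfl, -⟩) <;> assumption
  · tauto

lemma hostileEnv_A_of_notMem {k : Fin n} (hk : k ∉ S) : (hostileEnv p hp i S hiS).A k = S := by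
  ext l
  simp only [mem_hostileEnv_A]
  constructor
  · rintro (⟨h, -⟩ | ⟨h, -⟩)
    exacts [absurd h hk, h]
  · exact fun hl => Or.inr ⟨hl, by rintro rfl; exact hk hl⟩

lemma hostileEnv_F_of_mem {j : Fin n} (hj : j ∈ S) : (hostileEnv p hp i S hiS).F j = {j} := by
  ext l
  simp only [mem_hostileEnv_F, mem_singleton]
  constructor
  · rintro (rfl | ⟨rfl, -⟩ | ⟨-, h⟩)
    exacts [rfl, absurd hj hiS, absurd hj h]
  · exact fun h => Or.inl h.symm

lemma hostileEnv_A_of_mem {j : Fin n} (hj : j ∈ S) : (hostileEnv p hp i S hiS).A j = {j}ᶜ := by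
  ext l
  simp only [mem_hostileEnv_A, mem_compl, mem_singleton]
  constructor
  · rintro (⟨-, h⟩ | ⟨-, h⟩)
    exacts [h, Ne.symm h]
  · exact fun h => Or.inl ⟨hj, h⟩

/-- Countries outside `S ∪ {i}` spread their power over `S` in proportion to `p`, keeping the
rest at home; all other countries keep their power at home. -/
noncomputable def balancingStrat : Fin n → Fin n → ℝ := fun k l =>
  if k ∈ univ \ insert i S then
    if l ∈ S then p k * p l / ∑ m ∈ univ \ insert i S, p m
    else if l = k then p k * (1 - (∑ j ∈ S, p j) / ∑ m ∈ univ \ insert i S, p m) else 0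
  else if l = k then p k else 0

variable {p i S}

lemma balancingStrat_of_mem {j : Fin n} (hj : j ∈ S) (l : Fin n) :
    balancingStrat p i S j l = if l = j then p j else 0 := by
  simp [balancingStrat, hj]

lemma isStrat_balancingStrat (hpow : ∑ j ∈ S, p j ≤ ∑ k ∈ univ \ insert i S, p k) :
    IsStrat (hostileEnv p hp i S hiS) (balancingStrat p i S) := by
  set PT := ∑ k ∈ univ \ insert i S, p k
  have hPT : 0 ≤ PT := sum_nonneg fun k _ => hp k
  have hrest : 0 ≤ 1 - (∑ j ∈ S, p j) / PT := sub_nonneg.2 (div_le_one_of_le₀ hpow hPT)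
  refine ⟨fun k l => ?_, fun k => ?_, fun k l hF hA => ?_⟩
  · unfold balancingStrat
    split_ifs
    exacts [div_nonneg (mul_nonneg (hp k) (hp l)) hPT, mul_nonneg (hp k) hrest, le_rfl, hp k,
      le_rfl]
  · by_cases hk : k ∈ univ \ insert i S
    · have hkS : k ∉ S := fun h => (mem_sdiff.1 hk).2 (mem_insert_of_mem h)
      simp only [balancingStrat, if_pos hk, hostileEnv]
      rw [← sum_add_sum_compl S, sum_congr rfl fun l hl => if_pos hl,
        sum_congr rfl fun l hl => if_neg (mem_compl.1 hl), sum_ite_eq', if_pos (mem_compl.2 hkS),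
        ← sum_div, ← mul_sum]
      ring
    · simp [balancingStrat, hk, hostileEnv]
  · rw [mem_hostileEnv_F] at hF
    rw [mem_hostileEnv_A] at hA
    push Not at hF hA
    have hlk : l ≠ k := fun h => hF.1 h.symm
    unfold balancingStrat
    split_ifs with hk hl
    · exact absurd (hA.2 hl) hlk.symm
    all_goals rfl

lemma totalThreat_balancingStrat_of_mem (hpow : ∑ j ∈ S, p j ≤ ∑ k ∈ univ \ insert i S, p k)
    {j : Fin n} (hj : j ∈ S) :
    totalThreat (hostileEnv p hp i S hiS) (balancingStrat p i S) j = p j := by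
  set T := univ \ insert i S
  have hjT : j ∉ T := fun h => (mem_sdiff.1 h).2 (mem_insert_of_mem hj)
  have hcol : ∀ l ∈ ({j}ᶜ : Finset (Fin n)),
      balancingStrat p i S l j = if l ∈ T then p l * p j / ∑ m ∈ T, p m else 0 := by
    intro l hl
    have hlj : j ≠ l := Ne.symm (by simpa using hl)
    by_cases hlT : l ∈ T
    · rw [balancingStrat, if_pos hlT, if_pos hj, if_pos hlT]
    · rw [balancingStrat, if_neg hlT, if_neg hlj, if_neg hlT]
  have hT : T ⊆ {j}ᶜ := fun l hl => mem_compl.2 fun h => hjT (mem_singleton.1 h ▸ hl)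
  rw [totalThreat, hostileEnv_A_of_mem p hp i S hiS hj, sum_congr rfl hcol, sum_ite_mem,
    inter_eq_right.2 hT, ← sum_div, ← sum_mul]
  rcases (sum_nonneg fun k _ => hp k : 0 ≤ ∑ m ∈ T, p m).eq_or_lt with h | h
  · -- with no power outside `S ∪ {i}`, the powers in `S` vanish too
    have : p j = 0 := le_antisymm ((single_le_sum (fun k _ => hp k) hj).trans (h ▸ hpow)) (hp j)
    simp [this]
  · field_simp

lemma totalThreat_balancingStrat_of_notMem {k : Fin n} (hk : k ∉ S) :
    totalThreat (hostileEnv p hp i S hiS) (balancingStrat p i S) k = 0 := by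
  rw [totalThreat, hostileEnv_A_of_notMem p hp i S hiS hk]
  exact sum_eq_zero fun j hj => by
    rw [balancingStrat_of_mem hj, if_neg fun (h : k = j) => hk (h ▸ hj)]

lemma utility_hostileEnv_balancingStrat {tF1 tF0 tA1 tA0 : Fin n → Fin n → ℝ}
    (hpow : ∑ j ∈ S, p j ≤ ∑ k ∈ univ \ insert i S, p k) :
    utility (hostileEnv p hp i S hiS) tF1 tF0 tA1 tA0 (balancingStrat p i S) i =
      ∑ j ∈ Sᶜ, tF1 i j + ∑ j ∈ S, tA1 i j := by
  have hU := isStrat_balancingStrat hp hiS hpow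
  have hsafe : ∀ k ∉ S, Survives (hostileEnv p hp i S hiS) (balancingStrat p i S) k :=
    fun k hk => hU.survives_of_totalThreat_eq_zero (totalThreat_balancingStrat_of_notMem hp hiS hk)
  have hprecarious : ∀ j ∈ S, totalSupport (hostileEnv p hp i S hiS) (balancingStrat p i S) j =
      totalThreat (hostileEnv p hp i S hiS) (balancingStrat p i S) j := fun j hj =>
    (hU.totalSupport_eq_of_F_eq_singleton (hostileEnv_F_of_mem p hp i S hiS hj)
      (hostileEnv_A_of_mem p hp i S hiS hj)).trans
      (totalThreat_balancingStrat_of_mem hp hiS hpow hj).symm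
  rw [utility_of_survives (hsafe i hiS), hostileEnv_F_self,
    hostileEnv_A_of_notMem p hp i S hiS hiS]
  · rw [hostileEnv_F_self]
    exact fun j hj => hsafe j (mem_compl.1 hj)
  · rw [hostileEnv_A_of_notMem p hp i S hiS hiS]
    exact fun j hj => (hprecarious j hj).le

end Paradox

theorem paradox_sufficient_condition_subset_general {n : ℕ} (p : Fin n → ℝ)
    (hp : ∀ k, 0 ≤ p k) (i : Fin n) (S : Finset (Fin n))
    (hS : S.Nonempty) (hiS : i ∉ S)
    (tF1 tF0 tA1 tA0 : Fin n → Fin n → ℝ)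
    (ht : ∀ k l, tF0 k l ≤ tF1 k l ∧ tA0 k l ≤ tA1 k l)
    (htS : ∀ j ∈ S, tF1 i j < tA1 i j)
    (hpow : p i + ∑ j ∈ S, p j ≤ ∑ k ∈ Finset.univ \ insert i S, p k) :
    ∃ E E' : Env n, E.p = p ∧ E'.p = p ∧
      (∀ k l, l ∈ E.F k ↔ (k = l ∨ k = i ∨ l = i)) ∧
      (∀ k l, l ∈ E.A k ↔ ((k ∈ S ∧ l ≠ i ∧ l ≠ k) ∨ (l ∈ S ∧ k ≠ i ∧ k ≠ l))) ∧
      (∀ k l, l ∈ E'.F k ↔ (k = l ∨ (k = i ∧ l ∉ S) ∨ (l = i ∧ k ∉ S))) ∧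
      (∀ k l, l ∈ E'.A k ↔ ((k ∈ S ∧ l ≠ k) ∨ (l ∈ S ∧ k ≠ l))) ∧
      optWelfare E tF1 tF0 tA1 tA0 i < optWelfare E' tF1 tF0 tA1 tA0 i := by
  refine ⟨friendlyEnv p hp i S hiS, hostileEnv p hp i S hiS, rfl, rfl,
    mem_friendlyEnv_F p hp i S hiS, mem_friendlyEnv_A p hp i S hiS,
    mem_hostileEnv_F p hp i S hiS, mem_hostileEnv_A p hp i S hiS, ?_⟩
  have hpowS : ∑ j ∈ S, p j ≤ ∑ k ∈ univ \ insert i S, p k := by linarith [hp i]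
  calc optWelfare (friendlyEnv p hp i S hiS) tF1 tF0 tA1 tA0 i ≤ ∑ j, tF1 i j := by
        simpa only [friendlyEnv_F_self] using
          optWelfare_le_of_A_eq_empty (ht i) (friendlyEnv_A_self p hp i S hiS)
    _ = ∑ j ∈ Sᶜ, tF1 i j + ∑ j ∈ S, tF1 i j := (sum_compl_add_sum S _).symm
    _ < ∑ j ∈ Sᶜ, tF1 i j + ∑ j ∈ S, tA1 i j := by
        gcongr ?_ + ?_
        exact sum_lt_sum_of_nonempty hS htS
    _ = utility (hostileEnv p hp i S hiS) tF1 tF0 tA1 tA0 (balancingStrat p i S) i :=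
        (utility_hostileEnv_balancingStrat hp hiS hpowS).symm
    _ ≤ optWelfare (hostileEnv p hp i S hiS) tF1 tF0 tA1 tA0 i :=
        le_optWelfare (ht i) (isStrat_balancingStrat hp hiS hpowS)

/-- Corollary 1: if `t_ij^A(1) > t_ij^F(1)` for every `j` in a nonempty set
`S ∌ i` and `p_i + Σ_{j ∈ S} p_j ≤ Σ_{k ∉ S ∪ {i}} p_k`, then there are two environments
`E` (in which `i` is a friend of every country, every country other than `i` is an
adversary of every `j ∈ S`, and there are no other relations) and `E'` (the same except
`i` is an adversary of every `j ∈ S`) with `f*_i(E) < f*_i(E')`: having the countries of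
`S` as additional friends strictly decreases `i`'s optimal welfare. -/
theorem paradox_sufficient_condition_subset {n : ℕ} (p : Fin n → ℝ)
    (hp : ∀ k, 0 ≤ p k) (i : Fin n) (hpi : 0 < p i) (S : Finset (Fin n))
    (hS : S.Nonempty) (hiS : i ∉ S)
    (tF1 tF0 tA1 tA0 : Fin n → Fin n → ℝ)
    (ht : ∀ k l, tF0 k l ≤ tF1 k l ∧ tA0 k l ≤ tA1 k l)
    (htS : ∀ j ∈ S, tF1 i j < tA1 i j)
    (hpow : p i + ∑ j ∈ S, p j ≤ ∑ k ∈ Finset.univ \ insert i S, p k) :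
    ∃ E E' : Env n, E.p = p ∧ E'.p = p ∧
      (∀ k l, l ∈ E.F k ↔ (k = l ∨ k = i ∨ l = i)) ∧
      (∀ k l, l ∈ E.A k ↔ ((k ∈ S ∧ l ≠ i ∧ l ≠ k) ∨ (l ∈ S ∧ k ≠ i ∧ k ≠ l))) ∧
      (∀ k l, l ∈ E'.F k ↔ (k = l ∨ (k = i ∧ l ∉ S) ∨ (l = i ∧ k ∉ S))) ∧
      (∀ k l, l ∈ E'.A k ↔ ((k ∈ S ∧ l ≠ k) ∨ (l ∈ S ∧ k ≠ l))) ∧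
      optWelfare E tF1 tF0 tA1 tA0 i < optWelfare E' tF1 tF0 tA1 tA0 i :=
  paradox_sufficient_condition_subset_general p hp i S hS hiS tF1 tF0 tA1 tA0 ht htS hpow
end

section
/- (Theorem 4, price of anarchy bounds) Assume t_ij^F(0) ≥ 0 and t_ij^A(0) ≥ 0 for every ordered pair (i,j) with j ≠ i. Consider any environment with n ≥ 1 countries whose set of Nash equilibria is nonempty, and set A = n · max_{i∈N} ( Σ_{j∈F_i} t_ij^F(1) + Σ_{j∈A_i} t_ij^A(1) ) and B = (n−1) · min_{i∈N} t_ii^F(0) + min_{i∈N} t_ii^F(1). If B > 0, then the price of anarchy PoA = (sup over strategy matrices U of Σ_{i∈N} f_i(U)) / (inf over Nash equilibria U* of Σ_{i∈N} f_i(U*)) satisfies 1 ≤ PoA ≤ A/B. -/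
/-!
Every country's utility is at most the sum of all its `t(1)` values, so the welfare of every
strategy matrix is at most `A`. Conversely, the adversary relation is symmetric, so total support
summed over all countries is at least total threat summed over all countries; hence some country
survives and earns at least `t_ii^F(1)`, while every country earns at least `t_ii^F(0)`. The
welfare of every strategy matrix, in particular of every equilibrium, thus lies in `[B, A]`.
-/

open Finset

namespace Env

variable {n : ℕ} (E : Env n)

lemma ne_of_mem_A {i j : Fin n} (hj : j ∈ E.A i) : j ≠ i := by
  rintro rfl
  exact disjoint_left.mp (E.disj j) (E.self_friend j) hj

lemma le_sum_F {i : Fin n} {g : Fin n → ℝ} (hg : ∀ j ∈ E.F i, j ≠ i → 0 ≤ g j) :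
    g i ≤ ∑ j ∈ E.F i, g j := by
  rw [← add_sum_erase _ _ (E.self_friend i)]
  have : 0 ≤ ∑ j ∈ (E.F i).erase i, g j :=
    sum_nonneg fun j hj => hg j (mem_of_mem_erase hj) (ne_of_mem_erase hj)
  linarith

lemma sum_totalThreat_le_sum_totalSupport {U : Fin n → Fin n → ℝ} (hU : ∀ i j, 0 ≤ U i j) :
    ∑ i, totalThreat E U i ≤ ∑ i, totalSupport E U i := by
  have hswap : ∑ i, ∑ j ∈ E.A i, U j i = ∑ i, ∑ j ∈ E.A i, U i j :=
    sum_comm' fun i j => by simp [E.A_symm i j]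
  have hF : 0 ≤ ∑ i, ∑ j ∈ E.F i, U j i :=
    sum_nonneg fun i _ => sum_nonneg fun j _ => hU j i
  simp only [totalThreat, totalSupport, sum_add_distrib, hswap]
  linarith

lemma exists_survives [Nonempty (Fin n)] {U : Fin n → Fin n → ℝ} (hU : ∀ i j, 0 ≤ U i j) :
    ∃ i, Survives E U i := by
  by_contra! h
  have := sum_lt_sum_of_nonempty univ_nonempty fun i _ => lt_of_not_ge (h i)
  exact this.not_ge (E.sum_totalThreat_le_sum_totalSupport hU)

end Env

section Utility

variable {n : ℕ} (E : Env n) {tF1 tF0 tA1 tA0 : Fin n → Fin n → ℝ}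

lemma utility_le_sum_tF1_add_sum_tA1
    (ht : ∀ k j, tF0 k j ≤ tF1 k j ∧ tA0 k j ≤ tA1 k j)
    (ht0 : ∀ k j, j ≠ k → 0 ≤ tF0 k j ∧ 0 ≤ tA0 k j)
    (U : Fin n → Fin n → ℝ) (i : Fin n) :
    utility E tF1 tF0 tA1 tA0 U i ≤ (∑ j ∈ E.F i, tF1 i j) + ∑ j ∈ E.A i, tA1 i j := by
  unfold utility
  split_ifs
  · have hF : tF1 i i ≤ ∑ j ∈ E.F i, tF1 i j :=
      E.le_sum_F fun j _ hji => (ht0 i j hji).1.trans (ht i j).1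
    have hA : 0 ≤ ∑ j ∈ E.A i, tA1 i j :=
      sum_nonneg fun j hj => (ht0 i j (E.ne_of_mem_A hj)).2.trans (ht i j).2
    linarith [(ht i i).1]
  · gcongr with j _ j _
    · split_ifs
      exacts [le_rfl, (ht i j).1]
    · split_ifs
      exacts [le_rfl, (ht i j).2]

lemma tF1_le_utility_of_survives
    (ht : ∀ k j, tF0 k j ≤ tF1 k j ∧ tA0 k j ≤ tA1 k j)
    (ht0 : ∀ k j, j ≠ k → 0 ≤ tF0 k j ∧ 0 ≤ tA0 k j)
    {U : Fin n → Fin n → ℝ} {i : Fin n} (hi : Survives E U i) :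
    tF1 i i ≤ utility E tF1 tF0 tA1 tA0 U i := by
  have hsafe : ¬ totalSupport E U i < totalThreat E U i := not_lt.mpr hi
  have hF : tF1 i i ≤ ∑ j ∈ E.F i,
      if totalThreat E U j ≤ totalSupport E U j then tF1 i j else tF0 i j := by
    refine (if_pos hi).symm.trans_le (E.le_sum_F (g := fun j =>
      if totalThreat E U j ≤ totalSupport E U j then tF1 i j else tF0 i j) fun j _ hji => ?_)
    exact ite_nonneg ((ht0 i j hji).1.trans (ht i j).1) (ht0 i j hji).1
  have hA : 0 ≤ ∑ j ∈ E.A i,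
      if totalSupport E U j ≤ totalThreat E U j then tA1 i j else tA0 i j :=
    sum_nonneg fun j hj =>
      have h0 := (ht0 i j (E.ne_of_mem_A hj)).2
      ite_nonneg (h0.trans (ht i j).2) h0
  rw [utility, if_neg hsafe]
  linarith

lemma tF0_le_utility
    (ht : ∀ k j, tF0 k j ≤ tF1 k j ∧ tA0 k j ≤ tA1 k j)
    (ht0 : ∀ k j, j ≠ k → 0 ≤ tF0 k j ∧ 0 ≤ tA0 k j)
    (U : Fin n → Fin n → ℝ) (i : Fin n) :
    tF0 i i ≤ utility E tF1 tF0 tA1 tA0 U i := by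
  by_cases hi : Survives E U i
  · exact (ht i i).1.trans (tF1_le_utility_of_survives E ht ht0 hi)
  · rw [utility, if_pos (lt_of_not_ge hi)]

lemma sum_utility_le
    (ht : ∀ k j, tF0 k j ≤ tF1 k j ∧ tA0 k j ≤ tA1 k j)
    (ht0 : ∀ k j, j ≠ k → 0 ≤ tF0 k j ∧ 0 ≤ tA0 k j)
    (U : Fin n → Fin n → ℝ) :
    ∑ i, utility E tF1 tF0 tA1 tA0 U i ≤
      n * ⨆ i : Fin n, ((∑ j ∈ E.F i, tF1 i j) + ∑ j ∈ E.A i, tA1 i j) :=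
  calc ∑ i, utility E tF1 tF0 tA1 tA0 U i
      ≤ ∑ _i : Fin n, ⨆ k : Fin n, ((∑ j ∈ E.F k, tF1 k j) + ∑ j ∈ E.A k, tA1 k j) :=
        sum_le_sum fun i _ => (utility_le_sum_tF1_add_sum_tA1 E ht ht0 U i).trans
          (le_ciSup (f := fun k ↦ (∑ j ∈ E.F k, tF1 k j) + ∑ j ∈ E.A k, tA1 k j)
            (Set.finite_range _).bddAbove i)
    _ = n * ⨆ i : Fin n, ((∑ j ∈ E.F i, tF1 i j) + ∑ j ∈ E.A i, tA1 i j) := by simp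

lemma le_sum_utility [Nonempty (Fin n)]
    (ht : ∀ k j, tF0 k j ≤ tF1 k j ∧ tA0 k j ≤ tA1 k j)
    (ht0 : ∀ k j, j ≠ k → 0 ≤ tF0 k j ∧ 0 ≤ tA0 k j)
    {U : Fin n → Fin n → ℝ} (hU : ∀ i j, 0 ≤ U i j) :
    ((n : ℝ) - 1) * (⨅ i : Fin n, tF0 i i) + ⨅ i : Fin n, tF1 i i ≤
      ∑ i, utility E tF1 tF0 tA1 tA0 U i := by
  obtain ⟨i₀, hi₀⟩ := E.exists_survives hU
  set u := utility E tF1 tF0 tA1 tA0 U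
  set m := ⨅ i : Fin n, tF0 i i
  have hm : ∀ i, m ≤ u i := fun i =>
    (ciInf_le (Set.finite_range _).bddBelow i).trans (tF0_le_utility E ht ht0 U i)
  have hi₀u : (⨅ i : Fin n, tF1 i i) ≤ u i₀ :=
    (ciInf_le (Set.finite_range _).bddBelow i₀).trans (tF1_le_utility_of_survives E ht ht0 hi₀)
  have hsum : u i₀ - m ≤ ∑ i, (u i - m) :=
    single_le_sum (fun i _ => sub_nonneg.2 (hm i)) (mem_univ i₀)
  rw [sum_sub_distrib, sum_const, card_univ, Fintype.card_fin, nsmul_eq_mul] at hsum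
  linarith

end Utility

lemma one_le_sSup_div_sInf_le_div {S T : Set ℝ} {a b : ℝ} (hb : 0 < b) (hT : T.Nonempty)
    (hTS : T ⊆ S) (hS : ∀ x ∈ S, b ≤ x ∧ x ≤ a) :
    1 ≤ sSup S / sInf T ∧ sSup S / sInf T ≤ a / b := by
  obtain ⟨x, hx⟩ := hT
  have hSa : sSup S ≤ a := csSup_le ⟨x, hTS hx⟩ fun y hy => (hS y hy).2
  have hbT : b ≤ sInf T := le_csInf ⟨x, hx⟩ fun y hy => (hS y (hTS hy)).1
  have hTS : sInf T ≤ sSup S :=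
    (csInf_le ⟨b, fun y hy => (hS y (hTS hy)).1⟩ hx).trans
      (le_csSup ⟨a, fun y hy => (hS y hy).2⟩ (hTS hx))
  exact ⟨(one_le_div (hb.trans_le hbT)).2 hTS,
    div_le_div₀ (hb.le.trans (hbT.trans (hTS.trans hSa))) hSa hb hbT⟩

/-- Theorem 4: under nonnegativity of the `t(0)` utilities for `j ≠ i`,
in any environment with `n ≥ 1` countries possessing a Nash equilibrium, with
`A = n · max_i (Σ_{j ∈ F_i} t_ij^F(1) + Σ_{j ∈ A_i} t_ij^A(1))` and
`B = (n-1) · min_i t_ii^F(0) + min_i t_ii^F(1) > 0`, the price of anarchy satisfies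
`1 ≤ PoA ≤ A / B`. -/
theorem price_of_anarchy_bounds {n : ℕ} (hn : 0 < n) (E : Env n)
    (tF1 tF0 tA1 tA0 : Fin n → Fin n → ℝ)
    (ht : ∀ k j, tF0 k j ≤ tF1 k j ∧ tA0 k j ≤ tA1 k j)
    (ht0 : ∀ k j, j ≠ k → 0 ≤ tF0 k j ∧ 0 ≤ tA0 k j)
    (hNash : ∃ U, IsNash E tF1 tF0 tA1 tA0 U)
    (A B : ℝ)
    (hA : A = n * ⨆ i : Fin n, ((∑ j ∈ E.F i, tF1 i j) + ∑ j ∈ E.A i, tA1 i j))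
    (hB : B = ((n : ℝ) - 1) * (⨅ i : Fin n, tF0 i i) + ⨅ i : Fin n, tF1 i i)
    (hBpos : 0 < B) :
    1 ≤ sSup {x | ∃ U, IsStrat E U ∧ x = ∑ i, utility E tF1 tF0 tA1 tA0 U i} /
          sInf {x | ∃ U, IsNash E tF1 tF0 tA1 tA0 U ∧
            x = ∑ i, utility E tF1 tF0 tA1 tA0 U i} ∧
      sSup {x | ∃ U, IsStrat E U ∧ x = ∑ i, utility E tF1 tF0 tA1 tA0 U i} /
          sInf {x | ∃ U, IsNash E tF1 tF0 tA1 tA0 U ∧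
            x = ∑ i, utility E tF1 tF0 tA1 tA0 U i} ≤ A / B := by
  have : Nonempty (Fin n) := ⟨⟨0, hn⟩⟩
  obtain ⟨U₀, hU₀⟩ := hNash
  refine one_le_sSup_div_sInf_le_div hBpos ⟨_, U₀, hU₀, rfl⟩ ?_ ?_
  · rintro _ ⟨U, hU, rfl⟩
    exact ⟨U, hU.1, rfl⟩
  · rintro _ ⟨U, hU, rfl⟩
    exact ⟨hB ▸ le_sum_utility E ht ht0 hU.1, hA ▸ sum_utility_le E ht ht0 U⟩
end
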